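/- Euler's identity: Σ_{n≥0} z^n / (p)_n = 1 / (z; p)_∞ as formal power series in z and p, where (p)_n = Π_{k=1}^n (1 - p^k) and (z; p)_∞ = Π_{s=0}^∞ (1 - z p^s). -/

import Mathlib

/-!
Write `E(w) = ∑ wⁿ / (p)ₙ`. Since `(p)ₙ₊₁ = (p)ₙ (1 - pⁿ⁺¹)`, a termwise computation gives the
functional equation `(1 - w) E(w) = E(wp)`, hence `E(z) ∏_{s<N} (1 - zpˢ) = E(zpᴺ)`. As `N → ∞`
the left side tends to `E(z) (z;p)_∞` and, by dominated convergence, the right side to `E(0) = 1`.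
-/

open Finset Filter Topology

section EulerSeries

variable {𝕜 : Type*} [NormedField 𝕜] {p : 𝕜}

def qPochhammer (p : 𝕜) (n : ℕ) : 𝕜 := ∏ k ∈ range n, (1 - p ^ (k + 1))

noncomputable def eulerSeries (p w : 𝕜) : 𝕜 := ∑' n, w ^ n / qPochhammer p n

theorem qPochhammer_succ (p : 𝕜) (n : ℕ) :
    qPochhammer p (n + 1) = qPochhammer p n * (1 - p ^ (n + 1)) :=
  prod_range_succ _ n

theorem one_sub_pow_succ_ne_zero (hp : ‖p‖ < 1) (n : ℕ) : 1 - p ^ (n + 1) ≠ 0 := by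
  refine sub_ne_zero.mpr fun h => ?_
  have : ‖p‖ ^ (n + 1) < 1 := pow_lt_one₀ (norm_nonneg p) hp n.succ_ne_zero
  rw [← norm_pow, ← h, norm_one] at this
  exact this.false

theorem tendsto_one_sub_pow_succ (hp : ‖p‖ < 1) :
    Tendsto (fun n : ℕ => 1 - p ^ (n + 1)) atTop (𝓝 1) := by
  simpa using tendsto_const_nhds.sub
    ((tendsto_pow_atTop_nhds_zero_of_norm_lt_one hp).comp (tendsto_add_atTop_nat 1))

theorem summable_norm_pow_div_qPochhammer (hp : ‖p‖ < 1) {w : 𝕜} (hw : ‖w‖ < 1) :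
    Summable fun n => ‖w ^ n / qPochhammer p n‖ := by
  obtain ⟨r, hwr, hr⟩ := exists_between hw
  refine summable_of_ratio_norm_eventually_le hr ?_
  have hratio : Tendsto (fun n : ℕ => ‖w‖ / ‖1 - p ^ (n + 1)‖) atTop (𝓝 ‖w‖) := by
    simpa [div_eq_mul_inv] using
      ((tendsto_one_sub_pow_succ hp).norm.inv₀ (by simp)).const_mul ‖w‖
  filter_upwards [hratio.eventually_le_const hwr] with n hn
  have hstep : ‖w ^ (n + 1) / qPochhammer p (n + 1)‖ =
      ‖w‖ / ‖1 - p ^ (n + 1)‖ * ‖w ^ n / qPochhammer p n‖ := by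
    rw [qPochhammer_succ, pow_succ]
    simp only [norm_div, norm_mul, norm_pow]
    ring
  rw [norm_norm, norm_norm, hstep]
  exact mul_le_mul_of_nonneg_right hn (norm_nonneg _)

theorem norm_mul_pow_le (hp : ‖p‖ < 1) (z : 𝕜) (N : ℕ) : ‖z * p ^ N‖ ≤ ‖z‖ := by
  rw [norm_mul, norm_pow]
  exact mul_le_of_le_one_right (norm_nonneg z) (pow_le_one₀ (norm_nonneg p) hp.le)

variable [CompleteSpace 𝕜]

theorem summable_pow_div_qPochhammer (hp : ‖p‖ < 1) {w : 𝕜} (hw : ‖w‖ < 1) :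
    Summable fun n => w ^ n / qPochhammer p n :=
  (summable_norm_pow_div_qPochhammer hp hw).of_norm

theorem one_sub_mul_eulerSeries (hp : ‖p‖ < 1) {w : 𝕜} (hw : ‖w‖ < 1) :
    (1 - w) * eulerSeries p w = eulerSeries p (w * p) := by
  have hwp : ‖w * p‖ < 1 := by simpa using (norm_mul_pow_le hp w 1).trans_lt hw
  have hS := summable_pow_div_qPochhammer hp hw
  have hdiff : Summable fun n => w ^ n / qPochhammer p n - (w * p) ^ n / qPochhammer p n :=
    hS.sub (summable_pow_div_qPochhammer hp hwp)
  -- the `n`-th term `wⁿ (1 - pⁿ) / (p)ₙ` of the difference vanishes at `n = 0`, and for `n ≥ 1`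
  -- the factor `1 - pⁿ` cancels the last factor of `(p)ₙ`
  have hshift : eulerSeries p w - eulerSeries p (w * p) = w * eulerSeries p w := by
    rw [eulerSeries, eulerSeries, ← hS.tsum_sub (summable_pow_div_qPochhammer hp hwp),
      hdiff.tsum_eq_zero_add, ← tsum_mul_left]
    simp only [pow_zero, sub_self, zero_add]
    refine tsum_congr fun n => ?_
    rw [qPochhammer_succ, mul_pow, ← sub_div, ← mul_one_sub, pow_succ,
      mul_div_mul_right _ _ (one_sub_pow_succ_ne_zero hp n)]
    ring
  linear_combination hshift

theorem eulerSeries_mul_prod_range (hp : ‖p‖ < 1) {z : 𝕜} (hz : ‖z‖ < 1) (N : ℕ) :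
    eulerSeries p z * ∏ s ∈ range N, (1 - z * p ^ s) = eulerSeries p (z * p ^ N) := by
  induction N with
  | zero => simp
  | succ N ih =>
    rw [prod_range_succ, ← mul_assoc, ih, mul_comm,
      one_sub_mul_eulerSeries hp ((norm_mul_pow_le hp z N).trans_lt hz), mul_assoc, pow_succ]

theorem tendsto_eulerSeries_mul_pow (hp : ‖p‖ < 1) {z : 𝕜} (hz : ‖z‖ < 1) :
    Tendsto (fun N => eulerSeries p (z * p ^ N)) atTop (𝓝 1) := by
  have hlim : ∀ n, Tendsto (fun N => (z * p ^ N) ^ n / qPochhammer p n) atTop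
      (𝓝 ((0 : 𝕜) ^ n / qPochhammer p n)) := fun n => by
    simpa using ((tendsto_const_nhds (x := z)).mul
      (tendsto_pow_atTop_nhds_zero_of_norm_lt_one hp)).pow n |>.div_const (qPochhammer p n)
  have hbound : ∀ N n, ‖(z * p ^ N) ^ n / qPochhammer p n‖ ≤ ‖z ^ n / qPochhammer p n‖ := by
    intro N n
    simp only [norm_div, norm_pow]
    gcongr
    exact norm_mul_pow_le hp z N
  have hzero : ∑' n, (0 : 𝕜) ^ n / qPochhammer p n = 1 := by
    rw [tsum_eq_single 0 fun n hn => by simp [hn]]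
    simp [qPochhammer]
  rw [← hzero]
  exact tendsto_tsum_of_dominated_convergence (summable_norm_pow_div_qPochhammer hp hz) hlim
    (.of_forall hbound)

theorem multipliable_one_sub_mul_pow (hp : ‖p‖ < 1) (z : 𝕜) :
    Multipliable fun s : ℕ => 1 - z * p ^ s := by
  simp_rw [sub_eq_add_neg]
  refine multipliable_one_add_of_summable ?_
  simpa [norm_mul, norm_pow] using (summable_geometric_of_lt_one (norm_nonneg p) hp).mul_left ‖z‖

theorem eulerSeries_mul_tprod (hp : ‖p‖ < 1) {z : 𝕜} (hz : ‖z‖ < 1) :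
    eulerSeries p z * ∏' s : ℕ, (1 - z * p ^ s) = 1 := by
  have hpartial := ((multipliable_one_sub_mul_pow hp z).hasProd.tendsto_prod_nat).const_mul
    (eulerSeries p z)
  simp_rw [eulerSeries_mul_prod_range hp hz] at hpartial
  exact tendsto_nhds_unique hpartial (tendsto_eulerSeries_mul_pow hp hz)

end EulerSeries

/-- Euler's identity: `Σ_n z^n/(p)_n = 1/(z;p)_∞`. -/
theorem statement3 (p z : ℂ) (hp : ‖p‖ < 1) (hz : ‖z‖ < 1) :
    ∑' n : ℕ, z ^ n / (∏ k ∈ Finset.range n, (1 - p ^ (k + 1))) =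
    1 / ∏' s : ℕ, (1 - z * p ^ s) :=
  eq_one_div_of_mul_eq_one_left (eulerSeries_mul_tprod hp hz)
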